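/- Let C₁, C₂ be nonempty closed convex subsets of a real Hilbert space H with projections P₁, P₂, and let (z_n) be a sequence in C₂ such that |z_n - P₁ z_n| → d(C₁,C₂). Then |z_n - P₂(P₁ z_n)| → 0 as n → ∞. -/

import Mathlib

open Filter Topology

/-!
Write `a = z n`, `b = P₁ a`, `c = P₂ b`. Since `a ∈ C₂`, the variational inequality for `P₂`
says the angle at `c` in the triangle `a b c` is obtuse, so
`‖a - c‖² + d(C₁,C₂)² ≤ ‖a - c‖² + ‖b - c‖² ≤ ‖a - b‖²`,
and the right-hand side minus `d(C₁,C₂)²` tends to `0`.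
-/

/-- `P` is the nearest point projection of a real Hilbert space onto `C`. -/
def IsNearestPointProj {H : Type*} [NormedAddCommGroup H] [InnerProductSpace ℝ H]
    (C : Set H) (P : H → H) : Prop :=
  ∀ x, P x ∈ C ∧ ∀ y ∈ C, ‖x - P x‖ ≤ ‖x - y‖

/-- The distance between two sets. -/
noncomputable def setDist {H : Type*} [NormedAddCommGroup H] (C₁ C₂ : Set H) : ℝ :=
  sInf {d : ℝ | ∃ a ∈ C₁, ∃ b ∈ C₂, d = ‖a - b‖}

section SetDist

variable {H : Type*} [NormedAddCommGroup H] {C₁ C₂ : Set H}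

lemma setDist_nonneg : 0 ≤ setDist C₁ C₂ :=
  Real.sInf_nonneg <| by rintro _ ⟨a, -, b, -, rfl⟩; positivity

lemma setDist_le_norm_sub {a b : H} (ha : a ∈ C₁) (hb : b ∈ C₂) : setDist C₁ C₂ ≤ ‖a - b‖ :=
  csInf_le ⟨0, by rintro _ ⟨a, -, b, -, rfl⟩; positivity⟩ ⟨a, ha, b, hb, rfl⟩

end SetDist

section InnerProductSpace

variable {H : Type*} [NormedAddCommGroup H] [InnerProductSpace ℝ H]

lemma real_inner_sub_nonpos_of_forall_norm_sub_le {C : Set H} (hC : Convex ℝ C) {x c : H}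
    (hc : c ∈ C) (hmin : ∀ y ∈ C, ‖x - c‖ ≤ ‖x - y‖) {w : H} (hw : w ∈ C) :
    inner ℝ (x - c) (w - c) ≤ 0 := by
  have : Nonempty C := ⟨⟨c, hc⟩⟩
  refine (norm_eq_iInf_iff_real_inner_le_zero hC hc).mp ?_ w hw
  exact le_antisymm (le_ciInf fun y => hmin y y.2)
    (ciInf_le (f := fun y : C => ‖x - y‖) ⟨0, by rintro _ ⟨y, rfl⟩; positivity⟩ ⟨c, hc⟩)

lemma IsNearestPointProj.real_inner_sub_nonpos {C : Set H} {P : H → H}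
    (hP : IsNearestPointProj C P) (hC : Convex ℝ C) (x : H) {w : H} (hw : w ∈ C) :
    inner ℝ (x - P x) (w - P x) ≤ 0 :=
  real_inner_sub_nonpos_of_forall_norm_sub_le hC (hP x).1 (hP x).2 hw

lemma norm_sub_sq_add_norm_sub_sq_le_of_real_inner_nonpos {a b c : H}
    (h : inner ℝ (b - c) (a - c) ≤ 0) : ‖a - c‖ ^ 2 + ‖b - c‖ ^ 2 ≤ ‖a - b‖ ^ 2 := by
  have h_expand := norm_sub_sq_real (a - c) (b - c)
  rw [sub_sub_sub_cancel_right, real_inner_comm] at h_expand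
  linarith

lemma norm_sub_proj_proj_sq_add_setDist_sq_le {C₁ C₂ : Set H} (hC₂ : Convex ℝ C₂)
    {P₁ P₂ : H → H} (hP₁ : IsNearestPointProj C₁ P₁) (hP₂ : IsNearestPointProj C₂ P₂)
    {a : H} (ha : a ∈ C₂) :
    ‖a - P₂ (P₁ a)‖ ^ 2 + setDist C₁ C₂ ^ 2 ≤ ‖a - P₁ a‖ ^ 2 := by
  have hd : setDist C₁ C₂ ≤ ‖P₁ a - P₂ (P₁ a)‖ :=
    setDist_le_norm_sub (hP₁ a).1 (hP₂ (P₁ a)).1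
  have hd_sq := pow_le_pow_left₀ setDist_nonneg hd 2
  have := norm_sub_sq_add_norm_sub_sq_le_of_real_inner_nonpos
    (hP₂.real_inner_sub_nonpos hC₂ (P₁ a) ha)
  linarith

end InnerProductSpace

theorem stmt10_general {H : Type*} [NormedAddCommGroup H] [InnerProductSpace ℝ H]
    (C₁ C₂ : Set H) (h₂v : Convex ℝ C₂)
    (P₁ P₂ : H → H) (hP₁ : IsNearestPointProj C₁ P₁) (hP₂ : IsNearestPointProj C₂ P₂)
    (z : ℕ → H) (hz : ∀ n, z n ∈ C₂)
    (hlim : Tendsto (fun n => ‖z n - P₁ (z n)‖) atTop (𝓝 (setDist C₁ C₂))) :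
    Tendsto (fun n => ‖z n - P₂ (P₁ (z n))‖) atTop (𝓝 0) := by
  have hgap : Tendsto (fun n => √(‖z n - P₁ (z n)‖ ^ 2 - setDist C₁ C₂ ^ 2)) atTop (𝓝 0) := by
    convert ((hlim.pow 2).sub_const (setDist C₁ C₂ ^ 2)).sqrt
    rw [sub_self, Real.sqrt_zero]
  refine squeeze_zero (fun n => norm_nonneg _) (fun n => Real.le_sqrt_of_sq_le ?_) hgap
  linarith [norm_sub_proj_proj_sq_add_setDist_sq_le h₂v hP₁ hP₂ (hz n)]

theorem stmt10 {H : Type*} [NormedAddCommGroup H] [InnerProductSpace ℝ H] [CompleteSpace H]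
    (C₁ C₂ : Set H) (h₁ : C₁.Nonempty) (h₁c : IsClosed C₁) (h₁v : Convex ℝ C₁)
    (h₂ : C₂.Nonempty) (h₂c : IsClosed C₂) (h₂v : Convex ℝ C₂)
    (P₁ P₂ : H → H) (hP₁ : IsNearestPointProj C₁ P₁) (hP₂ : IsNearestPointProj C₂ P₂)
    (z : ℕ → H) (hz : ∀ n, z n ∈ C₂)
    (hlim : Tendsto (fun n => ‖z n - P₁ (z n)‖) atTop (𝓝 (setDist C₁ C₂))) :
    Tendsto (fun n => ‖z n - P₂ (P₁ (z n))‖) atTop (𝓝 0) :=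
  stmt10_general C₁ C₂ h₂v P₁ P₂ hP₁ hP₂ z hz hlim
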